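/- Let $\widehat{\Sigma}, \Sigma \in \mathbb{R}^{d\times d}$ and $\lambda > 0$ with $2\|\widehat{\Sigma} - \Sigma\|_\infty \leq \lambda$. Let $\widehat{\Sigma}^\lambda$ be the minimizer of $A \mapsto \|\widehat{\Sigma} - A\|_2^2 + \lambda\|A\|_1$. Then for every matrix $A \in \mathbb{R}^{d\times d}$, $\|\widehat{\Sigma}^\lambda - \Sigma\|_2^2 \leq \|A - \Sigma\|_2^2 + 3\lambda^2 \mathrm{rank}(A)$. -/

import Mathlib

/-!
Minimality of `Ŝ^λ` along the segment towards `A`, together with convexity of the nuclear norm,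
gives the variational inequality `λ (‖Ŝ^λ‖₁ - ‖A‖₁) ≤ 2 ⟨Ŝ - Ŝ^λ, Ŝ^λ - A⟩`. Write
`M = Ŝ^λ - A = P_A M + P_A^⊥ M`. Decomposability of the nuclear norm gives
`‖Ŝ^λ‖₁ ≥ ‖A‖₁ - ‖P_A M‖₁ + ‖P_A^⊥ M‖₁`, and trace duality bounds the noise term
`2 ⟨Ŝ - Σ, M⟩` by `λ (‖P_A M‖₁ + ‖P_A^⊥ M‖₁)`. The `P_A^⊥` terms cancel, and as `P_A M` has rank
at most `2 rank A`, `2 λ ‖P_A M‖₁ ≤ 2 λ √(2 rank A) ‖M‖₂ ≤ ‖M‖₂² + 2 λ² rank A`. Polarization of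
`⟨Ŝ^λ - Σ, M⟩` then gives the inequality, even with `2` in place of `3`.

Duality and decomposability both rest on the partial isometry `U Vᵀ` of a singular value
decomposition `N = U Σ Vᵀ`, obtained here from the eigendecomposition of `Nᵀ N`.
-/

open Matrix MeasureTheory Finset

/-- Singular values of a real matrix (as square roots of the eigenvalues of `Aᴴ * A`),
indexed by columns; not necessarily sorted. -/
noncomputable def sval {m q : ℕ} (A : Matrix (Fin m) (Fin q) ℝ) (k : Fin q) : ℝ :=
  Real.sqrt ((Matrix.isHermitian_conjTranspose_mul_self A).eigenvalues k)

/-- Nuclear (Schatten-1) norm: sum of singular values. -/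
noncomputable def nucNorm {m q : ℕ} (A : Matrix (Fin m) (Fin q) ℝ) : ℝ :=
  ∑ k, sval A k

/-- Frobenius (Schatten-2) norm. -/
noncomputable def frobNorm {m q : ℕ} (A : Matrix (Fin m) (Fin q) ℝ) : ℝ :=
  Real.sqrt (Matrix.trace (Aᴴ * A))

/-- Spectral norm: largest singular value. -/
noncomputable def specNorm {m q : ℕ} (A : Matrix (Fin m) (Fin q) ℝ) : ℝ :=
  ⨆ k, sval A k

/-- `rankAt A ε`: number of singular values of `A` that are `≥ ε`. -/
noncomputable def rankAt {m q : ℕ} (A : Matrix (Fin m) (Fin q) ℝ) (ε : ℝ) : ℕ :=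
  Nat.card {k : Fin q // ε ≤ sval A k}

/-- `svalOrd A k`: the `(k+1)`-th largest singular value of `A`. -/
noncomputable def svalOrd {m q : ℕ} (A : Matrix (Fin m) (Fin q) ℝ) (k : Fin q) : ℝ :=
  sSup {t : ℝ | (k : ℕ) + 1 ≤ rankAt A t}

open Filter Topology

theorem Matrix.rank_add_le {m n R : Type*} [Fintype n] [Field R] (A B : Matrix m n R) :
    (A + B).rank ≤ A.rank + B.rank := by
  rw [Matrix.rank, Matrix.rank, Matrix.rank, Matrix.mulVecLin_add]
  exact (Submodule.finrank_mono (LinearMap.range_add_le _ _)).trans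
    (Submodule.finrank_add_le_finrank_add_finrank _ _)

theorem Real.le_of_forall_mem_Ioc_le_add_mul {a b c : ℝ}
    (h : ∀ t ∈ Set.Ioc (0 : ℝ) 1, a ≤ b + t * c) : a ≤ b := by
  have hlim : Tendsto (fun t : ℝ => b + t * c) (𝓝[>] 0) (𝓝 b) := by
    have hcont : Continuous fun t : ℝ => b + t * c := by fun_prop
    simpa using (hcont.tendsto 0).mono_left nhdsWithin_le_nhds
  exact ge_of_tendsto hlim (eventually_of_mem (Ioc_mem_nhdsGT zero_lt_one) h)

variable {m n : ℕ}

section SingularValues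

variable (N : Matrix (Fin m) (Fin n) ℝ)

noncomputable def rightSingularVectors : Matrix (Fin n) (Fin n) ℝ :=
  (isHermitian_conjTranspose_mul_self N).eigenvectorUnitary

noncomputable def svdDiag (a : Fin n → ℝ) : Matrix (Fin n) (Fin n) ℝ :=
  rightSingularVectors N * diagonal a * (rightSingularVectors N)ᵀ

lemma transpose_rightSingularVectors_mul_self :
    (rightSingularVectors N)ᵀ * rightSingularVectors N = 1 := by
  simpa [rightSingularVectors, star_eq_conjTranspose] using
    Unitary.coe_star_mul_self (isHermitian_conjTranspose_mul_self N).eigenvectorUnitary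

lemma rightSingularVectors_mul_transpose_self :
    rightSingularVectors N * (rightSingularVectors N)ᵀ = 1 := by
  simpa [rightSingularVectors, star_eq_conjTranspose] using
    Unitary.coe_mul_star_self (isHermitian_conjTranspose_mul_self N).eigenvectorUnitary

lemma sval_nonneg (k : Fin n) : 0 ≤ sval N k := Real.sqrt_nonneg _

lemma sval_sq (k : Fin n) :
    sval N k ^ 2 = (isHermitian_conjTranspose_mul_self N).eigenvalues k :=
  Real.sq_sqrt (eigenvalues_conjTranspose_mul_self_nonneg N k)

lemma transpose_rightSingularVectors_mul_mul :
    (rightSingularVectors N)ᵀ * (Nᵀ * N) * rightSingularVectors N = diagonal (sval N ^ 2) := by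
  have h := (isHermitian_conjTranspose_mul_self N).conjStarAlgAut_star_eigenvectorUnitary
  have hsq : sval N ^ 2 = (isHermitian_conjTranspose_mul_self N).eigenvalues :=
    funext (sval_sq N)
  simpa [rightSingularVectors, hsq, star_eq_conjTranspose, Unitary.conjStarAlgAut_apply,
    Matrix.mul_assoc] using h

lemma transpose_mul_self_eq_svdDiag : Nᵀ * N = svdDiag N (sval N ^ 2) := by
  rw [svdDiag, ← transpose_rightSingularVectors_mul_mul]
  simp only [← Matrix.mul_assoc, rightSingularVectors_mul_transpose_self, Matrix.one_mul]
  rw [Matrix.mul_assoc, rightSingularVectors_mul_transpose_self, Matrix.mul_one]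

lemma svdDiag_mul_svdDiag (a b : Fin n → ℝ) : svdDiag N a * svdDiag N b = svdDiag N (a * b) := by
  set V := rightSingularVectors N
  calc V * diagonal a * Vᵀ * (V * diagonal b * Vᵀ)
      = V * (diagonal a * (Vᵀ * V) * diagonal b) * Vᵀ := by simp only [Matrix.mul_assoc]
    _ = svdDiag N (a * b) := by
      rw [transpose_rightSingularVectors_mul_self, Matrix.mul_one, diagonal_mul_diagonal]; rfl

lemma svdDiag_transpose (a : Fin n → ℝ) : (svdDiag N a)ᵀ = svdDiag N a := by
  simp [svdDiag, Matrix.transpose_mul, Matrix.mul_assoc]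

lemma svdDiag_one : svdDiag N 1 = 1 := by
  rw [svdDiag, show diagonal (1 : Fin n → ℝ) = 1 from diagonal_one, Matrix.mul_one,
    rightSingularVectors_mul_transpose_self]

lemma svdDiag_zero : svdDiag N 0 = 0 := by
  rw [svdDiag, show diagonal (0 : Fin n → ℝ) = 0 from diagonal_zero, Matrix.mul_zero,
    Matrix.zero_mul]

lemma svdDiag_sub (a b : Fin n → ℝ) : svdDiag N (a - b) = svdDiag N a - svdDiag N b := by
  rw [svdDiag, show diagonal (a - b) = diagonal a - diagonal b from (diagonal_sub a b).symm,
    Matrix.mul_sub, Matrix.sub_mul]; rfl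

lemma trace_svdDiag (a : Fin n → ℝ) : trace (svdDiag N a) = ∑ k, a k := by
  rw [svdDiag, trace_mul_comm, ← Matrix.mul_assoc, transpose_rightSingularVectors_mul_self,
    Matrix.one_mul, trace_diagonal]

end SingularValues

lemma sval_le_specNorm (N : Matrix (Fin m) (Fin n) ℝ) (k : Fin n) : sval N k ≤ specNorm N :=
  le_ciSup (Set.finite_range _).bddAbove k

lemma specNorm_nonneg (N : Matrix (Fin m) (Fin n) ℝ) : 0 ≤ specNorm N :=
  Real.iSup_nonneg (sval_nonneg N)

lemma nucNorm_nonneg (N : Matrix (Fin m) (Fin n) ℝ) : 0 ≤ nucNorm N :=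
  sum_nonneg fun k _ => sval_nonneg N k

lemma frobNorm_nonneg (N : Matrix (Fin m) (Fin n) ℝ) : 0 ≤ frobNorm N := Real.sqrt_nonneg _

lemma trace_transpose_mul_self_nonneg (N : Matrix (Fin m) (Fin n) ℝ) : 0 ≤ trace (Nᵀ * N) := by
  simpa [conjTranspose_eq_transpose_of_trivial] using
    (posSemidef_conjTranspose_mul_self N).trace_nonneg

lemma frobNorm_sq (N : Matrix (Fin m) (Fin n) ℝ) : frobNorm N ^ 2 = trace (Nᵀ * N) := by
  rw [frobNorm, conjTranspose_eq_transpose_of_trivial,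
    Real.sq_sqrt (trace_transpose_mul_self_nonneg N)]

lemma trace_transpose_mul_comm (X Y : Matrix (Fin m) (Fin n) ℝ) :
    trace (Xᵀ * Y) = trace (Yᵀ * X) := by
  rw [← trace_transpose, transpose_mul, transpose_transpose]

lemma frobNorm_add_sq (X Y : Matrix (Fin m) (Fin n) ℝ) :
    frobNorm (X + Y) ^ 2 = frobNorm X ^ 2 + 2 * trace (Xᵀ * Y) + frobNorm Y ^ 2 := by
  simp only [frobNorm_sq, transpose_add, Matrix.add_mul, Matrix.mul_add, trace_add,
    trace_transpose_mul_comm Y X]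
  ring

lemma frobNorm_smul_sq (c : ℝ) (X : Matrix (Fin m) (Fin n) ℝ) :
    frobNorm (c • X) ^ 2 = c ^ 2 * frobNorm X ^ 2 := by
  simp only [frobNorm_sq, transpose_smul, Matrix.smul_mul, Matrix.mul_smul, trace_smul, smul_eq_mul]
  ring

lemma two_mul_trace_transpose_mul (X Y : Matrix (Fin m) (Fin n) ℝ) :
    2 * trace (Xᵀ * Y) = frobNorm X ^ 2 + frobNorm Y ^ 2 - frobNorm (X - Y) ^ 2 := by
  have h := frobNorm_add_sq (X - Y) Y
  rw [sub_add_cancel, transpose_sub, Matrix.sub_mul, trace_sub, ← frobNorm_sq Y] at h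
  linarith

lemma diag_transpose_mul_diagonal_mul (a : Fin n → ℝ) (W : Matrix (Fin n) (Fin n) ℝ) (k : Fin n) :
    (Wᵀ * diagonal a * W) k k = ∑ l, a l * W l k ^ 2 := by
  simp only [mul_apply, transpose_apply, diagonal_apply, mul_ite, mul_zero, sum_ite_eq', mem_univ,
    if_true]
  exact sum_congr rfl fun l _ => by ring

lemma diag_transpose_mul_self (W : Matrix (Fin m) (Fin n) ℝ) (k : Fin n) :
    (Wᵀ * W) k k = ∑ l, W l k ^ 2 := by
  simp [mul_apply, sq]

lemma diag_transpose_mul_self_le (X : Matrix (Fin m) (Fin n) ℝ) (W : Matrix (Fin n) (Fin n) ℝ)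
    (k : Fin n) : ((X * W)ᵀ * (X * W)) k k ≤ specNorm X ^ 2 * (Wᵀ * W) k k := by
  set V := rightSingularVectors X
  have hXW : (X * W)ᵀ * (X * W) = (Vᵀ * W)ᵀ * diagonal (sval X ^ 2) * (Vᵀ * W) := by
    rw [← transpose_rightSingularVectors_mul_mul]
    simp only [transpose_mul, transpose_transpose, Matrix.mul_assoc]
    rw [← Matrix.mul_assoc V Vᵀ, rightSingularVectors_mul_transpose_self, Matrix.one_mul,
      ← Matrix.mul_assoc V Vᵀ, rightSingularVectors_mul_transpose_self, Matrix.one_mul]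
  have hWW : Wᵀ * W = (Vᵀ * W)ᵀ * (Vᵀ * W) := by
    rw [transpose_mul, transpose_transpose, Matrix.mul_assoc, ← Matrix.mul_assoc V,
      rightSingularVectors_mul_transpose_self, Matrix.one_mul]
  rw [hXW, hWW, diag_transpose_mul_diagonal_mul, diag_transpose_mul_self, mul_sum]
  refine sum_le_sum fun l _ => mul_le_mul_of_nonneg_right ?_ (sq_nonneg _)
  exact pow_le_pow_left₀ (sval_nonneg X l) (sval_le_specNorm X l) 2

lemma trace_transpose_mul_le (X Y : Matrix (Fin m) (Fin n) ℝ) :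
    trace (Xᵀ * Y) ≤ specNorm X * nucNorm Y := by
  -- Cauchy–Schwarz column by column, in the right singular basis of `Y`
  set V := rightSingularVectors Y
  have hcol : ∀ k, ∑ i, (X * V) i k * (Y * V) i k ≤ specNorm X * sval Y k := by
    intro k
    have hX : ∑ i, (X * V) i k ^ 2 ≤ specNorm X ^ 2 := by
      have h := diag_transpose_mul_self_le X V k
      rwa [transpose_rightSingularVectors_mul_self, one_apply_eq, mul_one,
        diag_transpose_mul_self] at h
    have hY : ∑ i, (Y * V) i k ^ 2 = sval Y k ^ 2 := by
      rw [← diag_transpose_mul_self, transpose_mul, Matrix.mul_assoc, ← Matrix.mul_assoc Yᵀ,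
        ← Matrix.mul_assoc, transpose_rightSingularVectors_mul_mul, diagonal_apply_eq, Pi.pow_apply]
    calc ∑ i, (X * V) i k * (Y * V) i k
        ≤ √(∑ i, (X * V) i k ^ 2) * √(∑ i, (Y * V) i k ^ 2) := Real.sum_mul_le_sqrt_mul_sqrt _ _ _
      _ ≤ specNorm X * sval Y k := by
        rw [hY, Real.sqrt_sq (sval_nonneg Y k)]
        exact mul_le_mul_of_nonneg_right ((Real.sqrt_le_left (specNorm_nonneg X)).2 hX)
          (sval_nonneg Y k)
  calc trace (Xᵀ * Y) = trace ((X * V)ᵀ * (Y * V)) := by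
        rw [transpose_mul, Matrix.mul_assoc, trace_mul_comm Vᵀ, Matrix.mul_assoc, Matrix.mul_assoc,
          rightSingularVectors_mul_transpose_self, Matrix.mul_one]
    _ = ∑ k, ∑ i, (X * V) i k * (Y * V) i k := by
        simp only [trace, diag_apply, mul_apply (M := (X * V)ᵀ), transpose_apply]
    _ ≤ ∑ k, specNorm X * sval Y k := sum_le_sum fun k _ => hcol k
    _ = specNorm X * nucNorm Y := by rw [← mul_sum]; rfl

lemma trace_transpose_mul_le_nucNorm {X : Matrix (Fin m) (Fin n) ℝ} (hX : specNorm X ≤ 1)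
    (Y : Matrix (Fin m) (Fin n) ℝ) :
    trace (Xᵀ * Y) ≤ nucNorm Y :=
  (trace_transpose_mul_le X Y).trans (mul_le_of_le_one_left (nucNorm_nonneg Y) hX)

lemma specNorm_le_one_of_idempotent {X : Matrix (Fin m) (Fin n) ℝ}
    (h : Xᵀ * X * (Xᵀ * X) = Xᵀ * X) : specNorm X ≤ 1 := by
  refine Real.iSup_le (fun k => ?_) zero_le_one
  have hH := isHermitian_conjTranspose_mul_self X
  have h' : Xᴴ * X * (Xᴴ * X) = Xᴴ * X := by simpa [conjTranspose_eq_transpose_of_trivial] using h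
  have hv := hH.mulVec_eigenvectorBasis k
  have hv0 : ⇑(hH.eigenvectorBasis k) ≠ 0 := fun h0 =>
    hH.eigenvectorBasis.orthonormal.ne_zero k (by simpa using congrArg (WithLp.toLp 2) h0)
  have hμ : (hH.eigenvalues k * hH.eigenvalues k - hH.eigenvalues k) • ⇑(hH.eigenvectorBasis k)
      = 0 := by
    rw [sub_smul, ← smul_smul, ← hv, ← mulVec_smul, ← hv, mulVec_mulVec, h', sub_self]
  have hμ' := sub_eq_zero.1 ((smul_eq_zero.1 hμ).resolve_right hv0)
  have hμ1 : hH.eigenvalues k ≤ 1 := by nlinarith [eigenvalues_conjTranspose_mul_self_nonneg X k]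
  exact Real.sqrt_le_one.mpr hμ1

section PolarIsometry

variable (N : Matrix (Fin m) (Fin n) ℝ)

/-- `U Vᵀ` for a singular value decomposition `N = U Σ Vᵀ`; the junk value `0⁻¹ = 0` makes
`(sval N)⁻¹` vanish on the kernel of `N`. -/
noncomputable def polarIsometry : Matrix (Fin m) (Fin n) ℝ := N * svdDiag N (sval N)⁻¹

lemma mul_svdDiag_mul_inv : N * svdDiag N (sval N * (sval N)⁻¹) = N := by
  have hker : N * svdDiag N (1 - sval N * (sval N)⁻¹) = 0 := by
    rw [← conjTranspose_mul_self_eq_zero, conjTranspose_eq_transpose_of_trivial, transpose_mul,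
      svdDiag_transpose, Matrix.mul_assoc, ← Matrix.mul_assoc Nᵀ, transpose_mul_self_eq_svdDiag,
      svdDiag_mul_svdDiag, svdDiag_mul_svdDiag, ← svdDiag_zero N]
    congr 1
    funext k
    simp only [Pi.mul_apply, Pi.sub_apply, Pi.one_apply, Pi.pow_apply, Pi.inv_apply, Pi.zero_apply]
    rcases eq_or_ne (sval N k) 0 with h | h <;> simp [h]
  rwa [svdDiag_sub, svdDiag_one, Matrix.mul_sub, Matrix.mul_one, sub_eq_zero, eq_comm] at hker

lemma transpose_polarIsometry : (polarIsometry N)ᵀ = svdDiag N (sval N)⁻¹ * Nᵀ := by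
  rw [polarIsometry, transpose_mul, svdDiag_transpose]

lemma transpose_polarIsometry_mul_self :
    (polarIsometry N)ᵀ * polarIsometry N = svdDiag N (sval N * (sval N)⁻¹) := by
  rw [transpose_polarIsometry, polarIsometry, Matrix.mul_assoc, ← Matrix.mul_assoc Nᵀ,
    transpose_mul_self_eq_svdDiag, svdDiag_mul_svdDiag, svdDiag_mul_svdDiag]
  congr 1
  funext k
  simp only [Pi.mul_apply, Pi.pow_apply, Pi.inv_apply]
  rcases eq_or_ne (sval N k) 0 with h | h <;> field_simp [h]

lemma transpose_polarIsometry_mul : (polarIsometry N)ᵀ * N = svdDiag N (sval N) := by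
  rw [transpose_polarIsometry, Matrix.mul_assoc, transpose_mul_self_eq_svdDiag,
    svdDiag_mul_svdDiag]
  congr 1
  funext k
  simp only [Pi.mul_apply, Pi.pow_apply, Pi.inv_apply]
  rcases eq_or_ne (sval N k) 0 with h | h <;> field_simp [h]

lemma trace_transpose_polarIsometry_mul : trace ((polarIsometry N)ᵀ * N) = nucNorm N := by
  rw [transpose_polarIsometry_mul, trace_svdDiag]; rfl

lemma polarIsometry_mul_transpose_mul_self :
    polarIsometry N * ((polarIsometry N)ᵀ * polarIsometry N) = polarIsometry N := by
  rw [transpose_polarIsometry_mul_self, polarIsometry, Matrix.mul_assoc, svdDiag_mul_svdDiag,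
    mul_comm, ← svdDiag_mul_svdDiag, ← Matrix.mul_assoc, mul_svdDiag_mul_inv]

lemma polarIsometry_mul_transpose_mul : polarIsometry N * ((polarIsometry N)ᵀ * N) = N := by
  rw [transpose_polarIsometry_mul, polarIsometry, Matrix.mul_assoc, svdDiag_mul_svdDiag, mul_comm,
    mul_svdDiag_mul_inv]

lemma mul_transpose_polarIsometry_mul_self :
    N * ((polarIsometry N)ᵀ * polarIsometry N) = N := by
  rw [transpose_polarIsometry_mul_self, mul_svdDiag_mul_inv]

variable {N}

lemma polarIsometry_mul_eq_zero {p : ℕ} {Y : Matrix (Fin n) (Fin p) ℝ} (h : N * Y = 0) :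
    polarIsometry N * Y = 0 := by
  have hsupp : (polarIsometry N)ᵀ * polarIsometry N = svdDiag N ((sval N)⁻¹ ^ 2) * (Nᵀ * N) := by
    rw [transpose_polarIsometry_mul_self, transpose_mul_self_eq_svdDiag, svdDiag_mul_svdDiag]
    congr 1
    funext k
    simp only [Pi.mul_apply, Pi.pow_apply, Pi.inv_apply]
    rcases eq_or_ne (sval N k) 0 with hs | hs <;> field_simp [hs]
  rw [← polarIsometry_mul_transpose_mul_self N, hsupp]
  simp only [Matrix.mul_assoc, h, Matrix.mul_zero]

lemma transpose_polarIsometry_mul_eq_zero {p : ℕ} {Y : Matrix (Fin m) (Fin p) ℝ}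
    (h : Nᵀ * Y = 0) : (polarIsometry N)ᵀ * Y = 0 := by
  rw [transpose_polarIsometry, Matrix.mul_assoc, h, Matrix.mul_zero]

lemma rank_polarIsometry_le : (polarIsometry N).rank ≤ N.rank := rank_mul_le_left _ _

lemma specNorm_polarIsometry_le_one : specNorm (polarIsometry N) ≤ 1 := by
  apply specNorm_le_one_of_idempotent
  rw [Matrix.mul_assoc, polarIsometry_mul_transpose_mul_self]

lemma specNorm_neg_polarIsometry_le_one : specNorm (-polarIsometry N) ≤ 1 := by
  apply specNorm_le_one_of_idempotent
  simp only [transpose_neg, Matrix.neg_mul, Matrix.mul_neg, neg_neg]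
  rw [Matrix.mul_assoc, polarIsometry_mul_transpose_mul_self]

end PolarIsometry

section SupportProjections

variable (A M : Matrix (Fin m) (Fin n) ℝ)

noncomputable def colProj : Matrix (Fin m) (Fin m) ℝ := polarIsometry A * (polarIsometry A)ᵀ

noncomputable def rowProj : Matrix (Fin n) (Fin n) ℝ := (polarIsometry A)ᵀ * polarIsometry A

/-- The paper's `P_A^⊥ M`. -/
noncomputable def projPerp : Matrix (Fin m) (Fin n) ℝ := (1 - colProj A) * M * (1 - rowProj A)

lemma colProj_transpose : (colProj A)ᵀ = colProj A := by
  rw [colProj, transpose_mul, transpose_transpose]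

lemma rowProj_transpose : (rowProj A)ᵀ = rowProj A := by
  rw [rowProj, transpose_mul, transpose_transpose]

lemma colProj_mul_self : colProj A * colProj A = colProj A := by
  rw [colProj, ← Matrix.mul_assoc, Matrix.mul_assoc (polarIsometry A),
    polarIsometry_mul_transpose_mul_self]

lemma rowProj_mul_self : rowProj A * rowProj A = rowProj A := by
  rw [rowProj, Matrix.mul_assoc, polarIsometry_mul_transpose_mul_self]

lemma colProj_mul : colProj A * A = A := by
  rw [colProj, Matrix.mul_assoc, polarIsometry_mul_transpose_mul]

lemma mul_rowProj : A * rowProj A = A := mul_transpose_polarIsometry_mul_self A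

lemma rank_colProj_le : (colProj A).rank ≤ A.rank :=
  (rank_mul_le_left _ _).trans rank_polarIsometry_le

lemma rank_rowProj_le : (rowProj A).rank ≤ A.rank :=
  (rank_mul_le_right _ _).trans rank_polarIsometry_le

lemma transpose_mul_projPerp : Aᵀ * projPerp A M = 0 := by
  have h : Aᵀ * colProj A = Aᵀ := by
    simpa [transpose_mul, colProj_transpose] using congrArg transpose (colProj_mul A)
  rw [projPerp, ← Matrix.mul_assoc, ← Matrix.mul_assoc, Matrix.mul_sub Aᵀ, Matrix.mul_one, h,
    sub_self, Matrix.zero_mul, Matrix.zero_mul]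

lemma mul_transpose_projPerp : A * (projPerp A M)ᵀ = 0 := by
  rw [projPerp, transpose_mul, transpose_mul, transpose_sub, transpose_one, rowProj_transpose,
    ← Matrix.mul_assoc, ← Matrix.mul_assoc, Matrix.mul_sub, Matrix.mul_one, mul_rowProj, sub_self,
    Matrix.zero_mul, Matrix.zero_mul]

lemma sub_projPerp : M - projPerp A M = colProj A * M + (1 - colProj A) * M * rowProj A := by
  simp only [projPerp, Matrix.sub_mul, Matrix.mul_sub, Matrix.one_mul, Matrix.mul_one]
  abel

lemma trace_transpose_sub_projPerp_mul : trace ((M - projPerp A M)ᵀ * projPerp A M) = 0 := by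
  have hcol : colProj A * projPerp A M = 0 := by
    rw [projPerp, ← Matrix.mul_assoc, ← Matrix.mul_assoc, Matrix.mul_sub (colProj A),
      Matrix.mul_one, colProj_mul_self, sub_self, Matrix.zero_mul, Matrix.zero_mul]
  have hrow : projPerp A M * rowProj A = 0 := by
    rw [projPerp, Matrix.mul_assoc, Matrix.sub_mul 1 (rowProj A), Matrix.one_mul, rowProj_mul_self,
      sub_self, Matrix.mul_zero]
  rw [sub_projPerp, transpose_add, Matrix.add_mul, trace_add, transpose_mul, colProj_transpose,
    Matrix.mul_assoc, hcol, Matrix.mul_zero, transpose_mul, rowProj_transpose, Matrix.mul_assoc,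
    trace_mul_comm, Matrix.mul_assoc, hrow, Matrix.mul_zero, trace_zero, add_zero]

lemma frobNorm_sub_projPerp_le : frobNorm (M - projPerp A M) ≤ frobNorm M := by
  have h := frobNorm_add_sq (M - projPerp A M) (projPerp A M)
  rw [sub_add_cancel, trace_transpose_sub_projPerp_mul] at h
  exact (pow_le_pow_iff_left₀ (frobNorm_nonneg _) (frobNorm_nonneg _) two_ne_zero).1
    (by nlinarith [sq_nonneg (frobNorm (projPerp A M))])

lemma rank_sub_projPerp_le : (M - projPerp A M).rank ≤ 2 * A.rank := by
  rw [sub_projPerp]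
  calc _ ≤ (colProj A * M).rank + ((1 - colProj A) * M * rowProj A).rank := rank_add_le _ _
    _ ≤ A.rank + A.rank := add_le_add ((rank_mul_le_left _ _).trans (rank_colProj_le A))
        ((rank_mul_le_right _ _).trans (rank_rowProj_le A))
    _ = 2 * A.rank := by ring

end SupportProjections

section DisjointSupports

variable {A B : Matrix (Fin m) (Fin n) ℝ}

lemma transpose_polarIsometry_mul_polarIsometry_eq_zero (h : Aᵀ * B = 0) :
    (polarIsometry A)ᵀ * polarIsometry B = 0 :=
  transpose_polarIsometry_mul_eq_zero <| by
    rw [polarIsometry, ← Matrix.mul_assoc, h, Matrix.zero_mul]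

lemma polarIsometry_mul_transpose_polarIsometry_eq_zero (h : A * Bᵀ = 0) :
    polarIsometry A * (polarIsometry B)ᵀ = 0 := by
  have hBA : polarIsometry B * Aᵀ = 0 :=
    polarIsometry_mul_eq_zero (by simpa [transpose_mul] using congrArg transpose h)
  exact polarIsometry_mul_eq_zero (by simpa [transpose_mul] using congrArg transpose hBA)

lemma specNorm_polarIsometry_add_le_one (h₁ : Aᵀ * B = 0) (h₂ : A * Bᵀ = 0) :
    specNorm (polarIsometry A + polarIsometry B) ≤ 1 := by
  apply specNorm_le_one_of_idempotent
  set G := polarIsometry A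
  set H := polarIsometry B
  have hGH : Gᵀ * H = 0 := transpose_polarIsometry_mul_polarIsometry_eq_zero h₁
  have hHG : Hᵀ * G = 0 := by simpa [transpose_mul] using congrArg transpose hGH
  have hGH' : G * (Hᵀ * H) = 0 := by
    rw [← Matrix.mul_assoc, polarIsometry_mul_transpose_polarIsometry_eq_zero h₂, Matrix.zero_mul]
  have hHG' : H * (Gᵀ * G) = 0 := by
    have h : H * Gᵀ = 0 := by
      simpa [transpose_mul] using
        congrArg transpose (polarIsometry_mul_transpose_polarIsometry_eq_zero h₂)
    rw [← Matrix.mul_assoc, h, Matrix.zero_mul]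
  have hsum : (G + H)ᵀ * (G + H) = Gᵀ * G + Hᵀ * H := by
    rw [transpose_add, Matrix.add_mul, Matrix.mul_add, Matrix.mul_add, hGH, hHG]
    abel
  have hGG : G * (Gᵀ * G) = G := polarIsometry_mul_transpose_mul_self A
  have hHH : H * (Hᵀ * H) = H := polarIsometry_mul_transpose_mul_self B
  rw [hsum, Matrix.add_mul, Matrix.mul_add, Matrix.mul_add]
  simp only [Matrix.mul_assoc, hGH', hHG', hGG, hHH, Matrix.mul_zero]
  abel

end DisjointSupports

lemma trace_transpose_polarIsometry_projPerp_mul (A M : Matrix (Fin m) (Fin n) ℝ) :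
    trace ((polarIsometry (projPerp A M))ᵀ * M) = nucNorm (projPerp A M) := by
  set B := projPerp A M
  set G := polarIsometry A
  set H := polarIsometry B
  have hHG : Hᵀ * G = 0 := by
    simpa [transpose_mul] using congrArg transpose
      (transpose_polarIsometry_mul_polarIsometry_eq_zero (transpose_mul_projPerp A M))
  have hGH : G * Hᵀ = 0 :=
    polarIsometry_mul_transpose_polarIsometry_eq_zero (mul_transpose_projPerp A M)
  have hcol : Hᵀ * (colProj A * M) = 0 := by
    rw [colProj, ← Matrix.mul_assoc, ← Matrix.mul_assoc, hHG, Matrix.zero_mul, Matrix.zero_mul]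
  have hrow : trace (Hᵀ * ((1 - colProj A) * M * rowProj A)) = 0 := by
    rw [← Matrix.mul_assoc, trace_mul_comm, rowProj, Matrix.mul_assoc, ← Matrix.mul_assoc G, hGH,
      Matrix.zero_mul, Matrix.mul_zero, trace_zero]
  have hM : M = B + (colProj A * M + (1 - colProj A) * M * rowProj A) := by
    rw [← sub_projPerp]; abel
  rw [hM, Matrix.mul_add, Matrix.mul_add, trace_add, trace_add, hcol, trace_zero, hrow,
    trace_transpose_polarIsometry_mul]
  ring

lemma nucNorm_sub_add_nucNorm_projPerp_le (A M : Matrix (Fin m) (Fin n) ℝ) :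
    nucNorm A - nucNorm (M - projPerp A M) + nucNorm (projPerp A M) ≤ nucNorm (A + M) := by
  set B := projPerp A M
  have hdual := trace_transpose_mul_le_nucNorm
    (specNorm_polarIsometry_add_le_one (transpose_mul_projPerp A M) (mul_transpose_projPerp A M))
    (A + M)
  have hGB : (polarIsometry A)ᵀ * B = 0 :=
    transpose_polarIsometry_mul_eq_zero (transpose_mul_projPerp A M)
  have hHA : (polarIsometry B)ᵀ * A = 0 := transpose_polarIsometry_mul_eq_zero
    (by simpa [transpose_mul] using congrArg transpose (transpose_mul_projPerp A M))
  have hGM : -nucNorm (M - B) ≤ trace ((polarIsometry A)ᵀ * M) := by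
    have h := trace_transpose_mul_le_nucNorm (specNorm_neg_polarIsometry_le_one (N := A)) (M - B)
    rw [transpose_neg, Matrix.neg_mul, trace_neg, Matrix.mul_sub, hGB, sub_zero] at h
    linarith
  rw [transpose_add, Matrix.add_mul, Matrix.mul_add, Matrix.mul_add, trace_add, trace_add,
    trace_add, trace_transpose_polarIsometry_mul, hHA, trace_zero,
    trace_transpose_polarIsometry_projPerp_mul] at hdual
  linarith

lemma rank_eq_card_sval_ne_zero (N : Matrix (Fin m) (Fin n) ℝ) :
    N.rank = Fintype.card {k // sval N k ≠ 0} := by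
  rw [← rank_conjTranspose_mul_self,
    (isHermitian_conjTranspose_mul_self N).rank_eq_card_non_zero_eigs]
  exact Fintype.card_congr (Equiv.subtypeEquivRight fun k =>
    (Real.sqrt_ne_zero (eigenvalues_conjTranspose_mul_self_nonneg N k)).symm)

lemma nucNorm_le_sqrt_rank_mul_frobNorm (N : Matrix (Fin m) (Fin n) ℝ) :
    nucNorm N ≤ √(N.rank : ℝ) * frobNorm N := by
  classical
  set S := univ.filter fun k => sval N k ≠ 0
  have hnuc : nucNorm N = ∑ k ∈ S, 1 * sval N k := by
    simp only [S, one_mul, sum_filter_ne_zero]; rfl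
  have hcard : ∑ k ∈ S, (1 : ℝ) ^ 2 = N.rank := by
    simp [S, rank_eq_card_sval_ne_zero, Fintype.card_subtype]
  have hfrob : ∑ k ∈ S, sval N k ^ 2 ≤ frobNorm N ^ 2 := by
    rw [frobNorm_sq, transpose_mul_self_eq_svdDiag, trace_svdDiag]
    exact sum_le_sum_of_subset_of_nonneg (subset_univ _) fun k _ _ => sq_nonneg _
  calc nucNorm N = ∑ k ∈ S, 1 * sval N k := hnuc
    _ ≤ √(∑ k ∈ S, (1 : ℝ) ^ 2) * √(∑ k ∈ S, sval N k ^ 2) := Real.sum_mul_le_sqrt_mul_sqrt _ _ _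
    _ ≤ √(N.rank : ℝ) * frobNorm N := by
      rw [hcard]
      exact mul_le_mul_of_nonneg_left ((Real.sqrt_le_left (frobNorm_nonneg N)).2 hfrob)
        (Real.sqrt_nonneg _)

lemma nucNorm_sub_projPerp_le (A M : Matrix (Fin m) (Fin n) ℝ) :
    nucNorm (M - projPerp A M) ≤ √(2 * A.rank : ℝ) * frobNorm M := by
  refine (nucNorm_le_sqrt_rank_mul_frobNorm _).trans (mul_le_mul ?_ (frobNorm_sub_projPerp_le A M)
    (frobNorm_nonneg _) (Real.sqrt_nonneg _))
  exact Real.sqrt_le_sqrt (by exact_mod_cast rank_sub_projPerp_le A M)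

lemma two_mul_trace_le_of_two_mul_specNorm_le {E : Matrix (Fin m) (Fin n) ℝ} {lam : ℝ}
    (hE : 2 * specNorm E ≤ lam) (M B : Matrix (Fin m) (Fin n) ℝ) :
    2 * trace (Eᵀ * M) ≤ lam * (nucNorm (M - B) + nucNorm B) := by
  have hsplit : trace (Eᵀ * M) = trace (Eᵀ * (M - B)) + trace (Eᵀ * B) := by
    rw [← trace_add, ← Matrix.mul_add, sub_add_cancel]
  calc 2 * trace (Eᵀ * M)
      ≤ 2 * (specNorm E * nucNorm (M - B) + specNorm E * nucNorm B) := by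
        rw [hsplit]
        gcongr
        exacts [trace_transpose_mul_le E _, trace_transpose_mul_le E _]
    _ = 2 * specNorm E * (nucNorm (M - B) + nucNorm B) := by ring
    _ ≤ lam * (nucNorm (M - B) + nucNorm B) :=
        mul_le_mul_of_nonneg_right hE (add_nonneg (nucNorm_nonneg _) (nucNorm_nonneg _))

lemma nucNorm_convexOn : ConvexOn ℝ Set.univ (nucNorm : Matrix (Fin m) (Fin n) ℝ → ℝ) := by
  refine ⟨convex_univ, fun X _ Y _ a b ha hb _ => ?_⟩
  have hX := trace_transpose_mul_le_nucNorm (specNorm_polarIsometry_le_one (N := a • X + b • Y)) X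
  have hY := trace_transpose_mul_le_nucNorm (specNorm_polarIsometry_le_one (N := a • X + b • Y)) Y
  rw [← trace_transpose_polarIsometry_mul, Matrix.mul_add, Matrix.mul_smul, Matrix.mul_smul,
    trace_add, trace_smul, trace_smul]
  simp only [smul_eq_mul]
  nlinarith [mul_le_mul_of_nonneg_left hX ha, mul_le_mul_of_nonneg_left hY hb]

/-- `X` is the estimator `Ŝ^λ` built from `S`. -/
def IsNucNormPenalizedMin (S : Matrix (Fin m) (Fin n) ℝ) (lam : ℝ)
    (X : Matrix (Fin m) (Fin n) ℝ) : Prop :=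
  ∀ B, frobNorm (S - X) ^ 2 + lam * nucNorm X ≤ frobNorm (S - B) ^ 2 + lam * nucNorm B

lemma IsNucNormPenalizedMin.variational_inequality {S X : Matrix (Fin m) (Fin n) ℝ} {lam : ℝ}
    (hlam : 0 ≤ lam) (hX : IsNucNormPenalizedMin S lam X) (A : Matrix (Fin m) (Fin n) ℝ) :
    lam * (nucNorm X - nucNorm A) ≤ 2 * trace ((S - X)ᵀ * (X - A)) := by
  refine Real.le_of_forall_mem_Ioc_le_add_mul (c := frobNorm (X - A) ^ 2) fun t ⟨ht0, ht1⟩ => ?_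
  have hmin := hX ((1 - t) • X + t • A)
  have hconv := nucNorm_convexOn.2 (Set.mem_univ X) (Set.mem_univ A) (sub_nonneg.2 ht1) ht0.le
    (sub_add_cancel 1 t)
  have hexp : frobNorm (S - ((1 - t) • X + t • A)) ^ 2 = frobNorm (S - X) ^ 2
      + t * (2 * trace ((S - X)ᵀ * (X - A))) + t ^ 2 * frobNorm (X - A) ^ 2 := by
    rw [show S - ((1 - t) • X + t • A) = (S - X) + t • (X - A) by module, frobNorm_add_sq,
      frobNorm_smul_sq, Matrix.mul_smul, trace_smul, smul_eq_mul]
    ring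
  simp only [smul_eq_mul] at hconv
  have key : t * (lam * (nucNorm X - nucNorm A))
      ≤ t * (2 * trace ((S - X)ᵀ * (X - A)) + t * frobNorm (X - A) ^ 2) := by
    nlinarith [mul_le_mul_of_nonneg_left hconv hlam]
  exact le_of_mul_le_mul_left key ht0

/-- Oracle inequality for the penalized estimator: rank bound. -/
theorem oracle_inequality_rank {d : ℕ}
    (Shat Sig Slam : Matrix (Fin d) (Fin d) ℝ) (lam : ℝ) (hlam : 0 < lam)
    (hclose : 2 * specNorm (Shat - Sig) ≤ lam)
    (hmin : ∀ B : Matrix (Fin d) (Fin d) ℝ,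
        frobNorm (Shat - Slam) ^ 2 + lam * nucNorm Slam
          ≤ frobNorm (Shat - B) ^ 2 + lam * nucNorm B) :
    ∀ A : Matrix (Fin d) (Fin d) ℝ,
      frobNorm (Slam - Sig) ^ 2 ≤ frobNorm (A - Sig) ^ 2 + 3 * lam ^ 2 * (A.rank : ℝ) := by
  intro A
  set M := Slam - A
  set B := projPerp A M
  have hvar := IsNucNormPenalizedMin.variational_inequality hlam.le hmin A
  have hdecomp : nucNorm A - nucNorm (M - B) + nucNorm B ≤ nucNorm Slam := by
    simpa [M] using nucNorm_sub_add_nucNorm_projPerp_le A M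
  have hnoise := two_mul_trace_le_of_two_mul_specNorm_le hclose M B
  have hlow : nucNorm (M - B) ≤ √(2 * A.rank : ℝ) * frobNorm M := nucNorm_sub_projPerp_le A M
  have hsplit : trace ((Shat - Slam)ᵀ * M)
      = trace ((Shat - Sig)ᵀ * M) - trace ((Slam - Sig)ᵀ * M) := by
    rw [← trace_sub, ← Matrix.sub_mul, ← transpose_sub, sub_sub_sub_cancel_right]
  have hpolar : 2 * trace ((Slam - Sig)ᵀ * M)
      = frobNorm (Slam - Sig) ^ 2 + frobNorm M ^ 2 - frobNorm (A - Sig) ^ 2 := by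
    rw [two_mul_trace_transpose_mul, sub_sub_sub_cancel_left]
  have hcore : frobNorm (Slam - Sig) ^ 2
      ≤ frobNorm (A - Sig) ^ 2 + 2 * lam * nucNorm (M - B) - frobNorm M ^ 2 := by
    linarith [mul_le_mul_of_nonneg_left hdecomp hlam.le]
  have hsq : √(2 * A.rank : ℝ) ^ 2 = 2 * A.rank := Real.sq_sqrt (by positivity)
  calc frobNorm (Slam - Sig) ^ 2
      ≤ frobNorm (A - Sig) ^ 2 + 2 * lam * (√(2 * A.rank : ℝ) * frobNorm M) - frobNorm M ^ 2 := by
        nlinarith [mul_le_mul_of_nonneg_left hlow hlam.le]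
    _ ≤ frobNorm (A - Sig) ^ 2 + 2 * lam ^ 2 * A.rank := by
        nlinarith [sq_nonneg (frobNorm M - lam * √(2 * A.rank : ℝ))]
    _ ≤ frobNorm (A - Sig) ^ 2 + 3 * lam ^ 2 * A.rank := by
        nlinarith [mul_nonneg (sq_nonneg lam) (Nat.cast_nonneg (α := ℝ) A.rank)]
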